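/- Fix ε > 0 such that max(2dε, 10ε) < 1, and let G be a d-layer ReLU network satisfying the R2WDC with constant ε. Then for all nonzero x, y ∈ ℝ^k and all j ∈ [d], the vectors G_j(x) and G_j(y) are nonzero, so the angle θ_j = ∠(G_j(x), G_j(y)) is well-defined, and |θ_j − g(θ_{j−1})| ≤ 4√ε, where θ_0 = ∠(x,y) and g(θ) = cos⁻¹(((π − θ)cos θ + sin θ)/π). -/

import Mathlib

open scoped BigOperators
open Real MeasureTheory ProbabilityTheory Filter
open scoped Matrix

noncomputable section

namespace R2WDCFormal

/-- Euclidean inner product on `Fin n → ℝ`. -/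
def dotp {n : ℕ} (r s : Fin n → ℝ) : ℝ := ∑ i, r i * s i

/-- Euclidean norm on `Fin n → ℝ`. -/
def vnorm {n : ℕ} (r : Fin n → ℝ) : ℝ := Real.sqrt (dotp r r)

/-- Angle between two vectors. -/
def ang {n : ℕ} (r s : Fin n → ℝ) : ℝ := Real.arccos (dotp r s / (vnorm r * vnorm s))

/-- Outer product of two vectors, as a matrix. -/
def outer {n : ℕ} (u v : Fin n → ℝ) : Matrix (Fin n) (Fin n) ℝ := Matrix.of fun i j => u i * v j

/-- The matrix sending `r̂ ↦ ŝ`, `ŝ ↦ r̂` with kernel `span{r,s}ᗮ`. -/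
def Mswap {n : ℕ} (r s : Fin n → ℝ) : Matrix (Fin n) (Fin n) ℝ :=
  outer ((vnorm ((vnorm r)⁻¹ • r + (vnorm s)⁻¹ • s))⁻¹ • ((vnorm r)⁻¹ • r + (vnorm s)⁻¹ • s))
        ((vnorm ((vnorm r)⁻¹ • r + (vnorm s)⁻¹ • s))⁻¹ • ((vnorm r)⁻¹ • r + (vnorm s)⁻¹ • s)) -
  outer ((vnorm ((vnorm r)⁻¹ • r - (vnorm s)⁻¹ • s))⁻¹ • ((vnorm r)⁻¹ • r - (vnorm s)⁻¹ • s))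
        ((vnorm ((vnorm r)⁻¹ • r - (vnorm s)⁻¹ • s))⁻¹ • ((vnorm r)⁻¹ • r - (vnorm s)⁻¹ • s))

/-- The matrix `Q_{r,s}`. -/
def Qmat {n : ℕ} (r s : Fin n → ℝ) : Matrix (Fin n) (Fin n) ℝ :=
  if r = 0 ∨ s = 0 then 0
  else ((π - ang r s) / (2 * π)) • (1 : Matrix (Fin n) (Fin n) ℝ) +
    (Real.sin (ang r s) / (2 * π)) • Mswap r s

/-- `W_{+,x} = diag(Wx > 0) W`. -/
def Wplus {m n : ℕ} (W : Matrix (Fin m) (Fin n) ℝ) (x : Fin n → ℝ) : Matrix (Fin m) (Fin n) ℝ :=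
  Matrix.of fun i j => if 0 < W.mulVec x i then W i j else 0

/-- Entrywise ReLU. -/
def reluVec {n : ℕ} (v : Fin n → ℝ) : Fin n → ℝ := fun i => max (v i) 0

/-- Sub-network `G_j` of the ReLU network with layer sizes `nn` and weights `W`. -/
def subnet (nn : ℕ → ℕ) (W : ∀ i : ℕ, Matrix (Fin (nn (i + 1))) (Fin (nn i)) ℝ) :
    ∀ j : ℕ, (Fin (nn 0) → ℝ) → Fin (nn j) → ℝ
  | 0, x => x
  | j + 1, x => reluVec ((W j).mulVec (subnet nn W j x))

/-- `Λ_{j,x} = W_{j,+,x} ⋯ W_{1,+,x}`. -/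
def LambdaMat (nn : ℕ → ℕ) (W : ∀ i : ℕ, Matrix (Fin (nn (i + 1))) (Fin (nn i)) ℝ) :
    ∀ j : ℕ, (Fin (nn 0) → ℝ) → Matrix (Fin (nn j)) (Fin (nn 0)) ℝ
  | 0, _ => 1
  | j + 1, x => Wplus (W j) (subnet nn W j x) * LambdaMat nn W j x

/-- Range Restricted Weight Distribution Condition with constant `ε` of a `d`-layer network. -/
def R2WDCond (nn : ℕ → ℕ) (d : ℕ)
    (W : ∀ i : ℕ, Matrix (Fin (nn (i + 1))) (Fin (nn i)) ℝ) (ε : ℝ) : Prop :=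
  ∀ i < d, ∀ x y x₁ x₂ x₃ x₄ : Fin (nn 0) → ℝ,
    |dotp (((Wplus (W i) (subnet nn W i x))ᵀ * Wplus (W i) (subnet nn W i y) -
        Qmat (subnet nn W i x) (subnet nn W i y)).mulVec
        (subnet nn W i x₁ - subnet nn W i x₂)) (subnet nn W i x₃ - subnet nn W i x₄)| ≤
      ε * vnorm (subnet nn W i x₁ - subnet nn W i x₂) * vnorm (subnet nn W i x₃ - subnet nn W i x₄)

/-- Range Restricted Isometry Condition of `A` with respect to the network, with constant `ε`. -/
def RRICond (nn : ℕ → ℕ) (d : ℕ)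
    (W : ∀ i : ℕ, Matrix (Fin (nn (i + 1))) (Fin (nn i)) ℝ) {mm : ℕ}
    (A : Matrix (Fin mm) (Fin (nn d)) ℝ) (ε : ℝ) : Prop :=
  ∀ x₁ x₂ x₃ x₄ : Fin (nn 0) → ℝ,
    |dotp ((Aᵀ * A - 1).mulVec (subnet nn W d x₁ - subnet nn W d x₂))
        (subnet nn W d x₃ - subnet nn W d x₄)| ≤
      ε * vnorm (subnet nn W d x₁ - subnet nn W d x₂) * vnorm (subnet nn W d x₃ - subnet nn W d x₄)

/-- The angle-distortion function `g`. -/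
def gAngle (θ : ℝ) : ℝ := Real.arccos (((π - θ) * Real.cos θ + Real.sin θ) / π)

/-- The deterministic vector field `h̃_{x,y}`. -/
def htilde {k : ℕ} (d : ℕ) (x y : Fin k → ℝ) : Fin k → ℝ :=
  (1 / 2 ^ d : ℝ) • ((∏ i ∈ Finset.range d, (π - gAngle^[i] (ang x y)) / π) • y +
    (∑ i ∈ Finset.Ico 1 d, Real.sin (gAngle^[i] (ang x y)) / π *
      ∏ j ∈ Finset.Ico (i + 1) d, (π - gAngle^[j] (ang x y)) / π) •
      (vnorm y • (vnorm x)⁻¹ • x))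

/-- Spectral (ℓ²-operator) norm of a matrix. -/
def specNorm {a b : ℕ} (M : Matrix (Fin a) (Fin b) ℝ) : ℝ :=
  ⨆ v : {v : Fin b → ℝ // vnorm v ≤ 1}, vnorm (M.mulVec v)

/-- The entries of the random matrix `W` are i.i.d. `N(0, v)`. -/
def IIDGaussian {Ω : Type*} [MeasurableSpace Ω] (μ : Measure Ω) {a b : ℕ}
    (W : Ω → Fin a → Fin b → ℝ) (v : NNReal) : Prop :=
  Measure.map W μ = Measure.pi fun _ : Fin a => Measure.pi fun _ : Fin b => gaussianReal 0 v

/-- The noise factor `ω`. -/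
def omegaNoise (nn : ℕ → ℕ) (d mm : ℕ) : ℝ :=
  2 / 2 ^ ((d : ℝ) / 2) * Real.sqrt (13 / 12) *
    Real.sqrt ((nn 0 : ℝ) / mm * Real.log (5 * ∏ j ∈ Finset.Icc 1 d, Real.exp 1 * nn j / nn 0))

/-- Clarke subdifferential of `f` at `x`: the convex hull of all limits of gradients of `f`
at nearby differentiability points. -/
def clarkeSubdiff {k : ℕ} (f : (Fin k → ℝ) → ℝ) (x : Fin k → ℝ) : Set (Fin k → ℝ) :=
  convexHull ℝ {v : Fin k → ℝ | ∃ u : ℕ → Fin k → ℝ,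
    (∀ t, DifferentiableAt ℝ f (u t)) ∧
    Tendsto u atTop (nhds x) ∧
    Tendsto (fun t => fun i => fderiv ℝ f (u t) (Pi.single i 1)) atTop (nhds v)}

/-- The compressed sensing objective `f_cs`. -/
def fcs (nn : ℕ → ℕ) (d : ℕ) (W : ∀ i : ℕ, Matrix (Fin (nn (i + 1))) (Fin (nn i)) ℝ)
    {mm : ℕ} (A : Matrix (Fin mm) (Fin (nn d)) ℝ) (b : Fin mm → ℝ)
    (x : Fin (nn 0) → ℝ) : ℝ :=
  1 / 2 * vnorm (b - A.mulVec (subnet nn W d x)) ^ 2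

/-!
Put `r = G_i x`, `s = G_i y`. The R2WDC tested at `(x, y, y, 0, x, 0)` (note `G_i 0 = 0` and
`W_{+,r} r = relu (W r) = G_{i+1} x`) says `⟨G_{i+1} x, G_{i+1} y⟩` is within `ε ‖r‖ ‖s‖` of
`⟨Q_{r,s} s, r⟩ = ‖r‖ ‖s‖ cos (g θ) / 2`; at `x = y` it gives `‖G_{i+1} x‖² = ‖r‖² (1/2 ± ε)`, so
`G_{i+1} x ≠ 0`. Dividing, `cos θ_{i+1}` is within `5ε` of `cos (g θ_i)`. Finally, on `[0, π]`,
`|cos α - cos β| ≥ 2 sin² ((α - β) / 2)`, which is quadratic in `α - β` for small angles, so the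
cosine error `5ε` becomes an angle error of at most `4√ε`.
-/

open InnerProductGeometry

section Euclidean

variable {n : ℕ}

lemma dotp_eq_dotProduct (r s : Fin n → ℝ) : dotp r s = r ⬝ᵥ s := rfl

lemma dotp_eq_inner (r s : Fin n → ℝ) :
    dotp r s = inner ℝ (WithLp.toLp 2 r : EuclideanSpace ℝ (Fin n)) (WithLp.toLp 2 s) := by
  simp [dotp, EuclideanSpace.inner_eq_star_dotProduct, dotProduct, mul_comm]

lemma vnorm_eq_norm (r : Fin n → ℝ) :
    vnorm r = ‖(WithLp.toLp 2 r : EuclideanSpace ℝ (Fin n))‖ := by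
  rw [vnorm, dotp_eq_inner, real_inner_self_eq_norm_sq, Real.sqrt_sq (norm_nonneg _)]

lemma ang_eq_angle (r s : Fin n → ℝ) :
    ang r s = angle (WithLp.toLp 2 r : EuclideanSpace ℝ (Fin n)) (WithLp.toLp 2 s) := by
  rw [ang, angle, dotp_eq_inner, vnorm_eq_norm, vnorm_eq_norm]

lemma dotp_comm (r s : Fin n → ℝ) : dotp r s = dotp s r := dotProduct_comm r s

lemma dotp_self (r : Fin n → ℝ) : dotp r r = vnorm r * vnorm r := by
  rw [dotp_eq_inner, vnorm_eq_norm, real_inner_self_eq_norm_mul_norm]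

lemma vnorm_nonneg (r : Fin n → ℝ) : 0 ≤ vnorm r := Real.sqrt_nonneg _

lemma vnorm_pos {r : Fin n → ℝ} (hr : r ≠ 0) : 0 < vnorm r := by
  rw [vnorm_eq_norm, norm_pos_iff, Ne, WithLp.toLp_eq_zero]
  exact hr

lemma vnorm_mul_vnorm_mul_cos_ang (r s : Fin n → ℝ) :
    vnorm r * vnorm s * Real.cos (ang r s) = dotp r s := by
  rw [ang_eq_angle, vnorm_eq_norm, vnorm_eq_norm, dotp_eq_inner, mul_comm,
    cos_angle_mul_norm_mul_norm]

lemma cos_ang (r s : Fin n → ℝ) : Real.cos (ang r s) = dotp r s / (vnorm r * vnorm s) := by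
  rw [ang_eq_angle, vnorm_eq_norm, vnorm_eq_norm, dotp_eq_inner, cos_angle]

lemma ang_mem_Icc (r s : Fin n → ℝ) : ang r s ∈ Set.Icc 0 π :=
  ⟨Real.arccos_nonneg _, Real.arccos_le_pi _⟩

lemma ang_self {r : Fin n → ℝ} (hr : r ≠ 0) : ang r r = 0 := by
  rw [ang_eq_angle, angle_self (by rwa [Ne, WithLp.toLp_eq_zero])]

end Euclidean

lemma two_mul_sin_sq_half_le_abs_cos_sub_cos {α β : ℝ} (hα : α ∈ Set.Icc 0 π)
    (hβ : β ∈ Set.Icc 0 π) : 2 * Real.sin ((α - β) / 2) ^ 2 ≤ |Real.cos α - Real.cos β| := by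
  wlog hβα : β ≤ α generalizing α β
  · have h := this hβ hα (le_of_not_ge hβα)
    rwa [abs_sub_comm, show (β - α) / 2 = -((α - β) / 2) by ring, Real.sin_neg, neg_sq] at h
  obtain ⟨hα0, hαπ⟩ := hα
  obtain ⟨hβ0, hβπ⟩ := hβ
  have hdiff : 0 ≤ Real.sin ((α - β) / 2) :=
    Real.sin_nonneg_of_nonneg_of_le_pi (by linarith) (by linarith)
  have hsum : Real.sin ((α - β) / 2) ≤ Real.sin ((α + β) / 2) := by
    have h := Real.sin_sub_sin ((α + β) / 2) ((α - β) / 2)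
    rw [show ((α + β) / 2 - (α - β) / 2) / 2 = β / 2 by ring,
      show ((α + β) / 2 + (α - β) / 2) / 2 = α / 2 by ring] at h
    have hs : 0 ≤ Real.sin (β / 2) := Real.sin_nonneg_of_nonneg_of_le_pi (by linarith) (by linarith)
    have hc : 0 ≤ Real.cos (α / 2) := Real.cos_nonneg_of_mem_Icc ⟨by linarith, by linarith⟩
    nlinarith [mul_nonneg hs hc]
  have hcos : Real.cos β - Real.cos α = 2 * Real.sin ((α + β) / 2) * Real.sin ((α - β) / 2) := by
    rw [Real.cos_sub_cos, show (β - α) / 2 = -((α - β) / 2) by ring, Real.sin_neg, add_comm β α]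
    ring
  rw [abs_sub_comm, abs_of_nonneg (by nlinarith)]
  nlinarith

lemma abs_sub_le_four_mul_sqrt_of_abs_cos_sub_cos_le {α β ε : ℝ} (hα : α ∈ Set.Icc 0 π)
    (hβ : β ∈ Set.Icc 0 π) (hε : 10 * ε < 1) (h : |Real.cos α - Real.cos β| ≤ 5 * ε) :
    |α - β| ≤ 4 * Real.sqrt ε := by
  have hε0 : 0 ≤ ε := by linarith [abs_nonneg (Real.cos α - Real.cos β)]
  set s := Real.sqrt ε
  have hs0 : 0 ≤ s := Real.sqrt_nonneg ε
  have hss : s ^ 2 = ε := Real.sq_sqrt hε0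
  have hs1 : s < 1 / 2 := by nlinarith
  by_contra! hlt
  have hαβ : |α - β| ≤ π := abs_sub_le_iff.mpr ⟨by linarith [hα.2, hβ.1], by linarith [hα.1, hβ.2]⟩
  have hsq : Real.sin ((α - β) / 2) ^ 2 = Real.sin (|α - β| / 2) ^ 2 := by
    rcases abs_choice (α - β) with hab | hab <;> simp only [hab, neg_div, Real.sin_neg, neg_sq]
  have hlt' : Real.sin (2 * s) < Real.sin (|α - β| / 2) :=
    Real.sin_lt_sin_of_lt_of_le_pi_div_two (by linarith [Real.pi_pos]) (by linarith) (by linarith)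
  have hcube : 2 * s - (2 * s) ^ 3 / 6 ≤ Real.sin (2 * s) := Real.sin_ge_sub_cube (by positivity)
  have hsin0 : 0 ≤ Real.sin (2 * s) := Real.sin_nonneg_of_nonneg_of_le_pi (by positivity)
    (by linarith [Real.pi_gt_three])
  have hL : 0 ≤ 2 * s - (2 * s) ^ 3 / 6 := by nlinarith
  have hL2 : 5 * ε ≤ 2 * (2 * s - (2 * s) ^ 3 / 6) ^ 2 := by
    have hX : 0 ≤ 8 * (1 - 2 * ε / 3) ^ 2 - 5 := by nlinarith
    calc 5 * ε ≤ 8 * ε * (1 - 2 * ε / 3) ^ 2 := by nlinarith [mul_nonneg hε0 hX]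
      _ = 2 * (2 * s - (2 * s) ^ 3 / 6) ^ 2 := by rw [← hss]; ring
  have h2 := two_mul_sin_sq_half_le_abs_cos_sub_cos hα hβ
  rw [hsq] at h2
  nlinarith [mul_self_lt_mul_self hsin0 hlt', mul_self_le_mul_self hL hcube]

lemma abs_mul_sub_le_of_abs_mul_self_sub_le {a b A B ε : ℝ} (ha : 0 < a) (hb : 0 < b)
    (hA : 0 ≤ A) (hB : 0 ≤ B) (hε : ε < 1 / 2)
    (hAa : |A * A - a * a / 2| ≤ ε * a * a) (hBb : |B * B - b * b / 2| ≤ ε * b * b) :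
    |A * B - a * b / 2| ≤ ε * a * b := by
  obtain ⟨hAl, hAu⟩ := abs_le.mp hAa
  obtain ⟨hBl, hBu⟩ := abs_le.mp hBb
  have hε0 : 0 ≤ ε := by nlinarith [abs_nonneg (A * A - a * a / 2), mul_pos ha ha]
  have hlo : (1 / 2 - ε) * (a * b) ≤ A * B := by
    rw [mul_self_le_mul_self_iff (by nlinarith [mul_pos ha hb]) (mul_nonneg hA hB)]
    calc (1 / 2 - ε) * (a * b) * ((1 / 2 - ε) * (a * b))
        = ((1 / 2 - ε) * (a * a)) * ((1 / 2 - ε) * (b * b)) := by ring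
      _ ≤ (A * A) * (B * B) := by
          apply mul_le_mul <;> nlinarith [mul_pos ha ha, mul_pos hb hb]
      _ = A * B * (A * B) := by ring
  have hhi : A * B ≤ (1 / 2 + ε) * (a * b) := by
    rw [mul_self_le_mul_self_iff (mul_nonneg hA hB) (by positivity)]
    calc A * B * (A * B) = (A * A) * (B * B) := by ring
      _ ≤ ((1 / 2 + ε) * (a * a)) * ((1 / 2 + ε) * (b * b)) := by
          apply mul_le_mul <;> nlinarith [mul_pos ha ha, mul_pos hb hb]
      _ = (1 / 2 + ε) * (a * b) * ((1 / 2 + ε) * (a * b)) := by ring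
  rw [abs_le]
  constructor <;> nlinarith

lemma abs_div_mul_sub_le_five_mul {a b A B N P ε : ℝ} (ha : 0 < a) (hb : 0 < b)
    (hA : 0 ≤ A) (hB : 0 ≤ B) (hε : 10 * ε < 1) (hP : |P| ≤ 1)
    (hAa : |A * A - a * a / 2| ≤ ε * a * a) (hBb : |B * B - b * b / 2| ≤ ε * b * b)
    (hN : |N - a * b * P / 2| ≤ ε * a * b) :
    |N / (A * B) - P| ≤ 5 * ε := by
  have hε0 : 0 ≤ ε := by nlinarith [abs_nonneg (A * A - a * a / 2), mul_pos ha ha]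
  have hAB := abs_mul_sub_le_of_abs_mul_self_sub_le ha hb hA hB (by linarith) hAa hBb
  have hab : 0 < a * b := mul_pos ha hb
  have hABlo : 2 / 5 * (a * b) ≤ A * B := by nlinarith [(abs_le.mp hAB).1]
  have hABpos : 0 < A * B := lt_of_lt_of_le (by positivity) hABlo
  have hNP : |N - A * B * P| ≤ 2 * ε * (a * b) := by
    have hPAB : |(a * b / 2 - A * B) * P| ≤ ε * a * b := by
      rw [abs_mul, abs_sub_comm]
      nlinarith [abs_nonneg (A * B - a * b / 2), abs_nonneg P]
    calc |N - A * B * P| = |(N - a * b * P / 2) + (a * b / 2 - A * B) * P| := by ring_nf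
      _ ≤ |N - a * b * P / 2| + |(a * b / 2 - A * B) * P| := abs_add_le _ _
      _ ≤ 2 * ε * (a * b) := by linarith
  rw [div_sub' hABpos.ne', abs_div, abs_of_pos hABpos, div_le_iff₀ hABpos]
  nlinarith

def cosGAngle (θ : ℝ) : ℝ := ((π - θ) * Real.cos θ + Real.sin θ) / π

lemma cosGAngle_zero : cosGAngle 0 = 1 := by
  simp [cosGAngle, Real.pi_ne_zero]

lemma abs_cosGAngle_le_one {θ : ℝ} (hθ : θ ∈ Set.Icc 0 π) : |cosGAngle θ| ≤ 1 := by
  obtain ⟨hθ0, hθπ⟩ := hθ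
  have hcos : (π - θ) * |Real.cos θ| ≤ π - θ :=
    mul_le_of_le_one_right (by linarith) (Real.abs_cos_le_one θ)
  have hsin : 0 ≤ Real.sin θ := Real.sin_nonneg_of_nonneg_of_le_pi hθ0 hθπ
  have hsin' : Real.sin θ ≤ θ := Real.sin_le hθ0
  rw [cosGAngle, abs_div, abs_of_pos Real.pi_pos, div_le_one Real.pi_pos, abs_le]
  constructor <;> nlinarith [neg_abs_le (Real.cos θ), le_abs_self (Real.cos θ)]

lemma cos_gAngle {θ : ℝ} (hθ : θ ∈ Set.Icc 0 π) : Real.cos (gAngle θ) = cosGAngle θ :=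
  Real.cos_arccos (abs_le.mp (abs_cosGAngle_le_one hθ)).1 (abs_le.mp (abs_cosGAngle_le_one hθ)).2

section Qmat

variable {n : ℕ}

lemma dotp_mulVec_outer (u v s r : Fin n → ℝ) : dotp (outer u v *ᵥ s) r = dotp v s * dotp u r := by
  simp only [dotp_eq_dotProduct, outer, ← Matrix.vecMulVec.eq_def, Matrix.vecMulVec_mulVec,
    smul_dotProduct, op_smul_eq_mul, mul_comm]

lemma dotp_mulVec_outer_normalize (u s r : Fin n → ℝ) :
    dotp (outer ((vnorm u)⁻¹ • u) ((vnorm u)⁻¹ • u) *ᵥ s) r = dotp u s * dotp u r / dotp u u := by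
  rw [dotp_mulVec_outer, dotp_self u]
  simp only [dotp_eq_dotProduct, smul_dotProduct, smul_eq_mul]
  rw [div_eq_mul_inv, mul_inv]
  ring

lemma dotp_mulVec_transpose_mul {m : ℕ} (A B : Matrix (Fin m) (Fin n) ℝ) (v w : Fin n → ℝ) :
    dotp ((Aᵀ * B) *ᵥ v) w = dotp (B *ᵥ v) (A *ᵥ w) := by
  rw [dotp_eq_dotProduct, dotp_eq_dotProduct, ← Matrix.mulVec_mulVec, dotProduct_comm,
    Matrix.dotProduct_mulVec, Matrix.vecMul_transpose, dotProduct_comm]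

lemma mul_self_div_two_mul {K : Type*} [Field K] (t : K) : t * t / (2 * t) = t / 2 := by
  rw [mul_comm 2 t, ← div_div, mul_self_div_self]

lemma dotp_Mswap_mulVec {r s : Fin n → ℝ} (hr : r ≠ 0) (hs : s ≠ 0) :
    dotp (Mswap r s *ᵥ s) r = vnorm r * vnorm s := by
  rw [Mswap, Matrix.sub_mulVec, dotp_eq_dotProduct, sub_dotProduct, ← dotp_eq_dotProduct,
    ← dotp_eq_dotProduct, dotp_mulVec_outer_normalize, dotp_mulVec_outer_normalize]
  have ha := (vnorm_pos hr).ne'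
  have hb := (vnorm_pos hs).ne'
  have hrr : dotp r r = vnorm r * vnorm r := dotp_self r
  have hss : dotp s s = vnorm s * vnorm s := dotp_self s
  set a := vnorm r
  set b := vnorm s
  set p := a⁻¹ • r with hp_def
  set q := b⁻¹ • s with hq_def
  have hr' : r = a • p := by rw [hp_def, smul_smul, mul_inv_cancel₀ ha, one_smul]
  have hs' : s = b • q := by rw [hq_def, smul_smul, mul_inv_cancel₀ hb, one_smul]
  have hpp : dotp p p = 1 := by
    rw [hp_def, dotp_eq_dotProduct, smul_dotProduct, dotProduct_smul, smul_smul,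
      ← dotp_eq_dotProduct, hrr, smul_eq_mul]
    field_simp
  have hqq : dotp q q = 1 := by
    rw [hq_def, dotp_eq_dotProduct, smul_dotProduct, dotProduct_smul, smul_smul,
      ← dotp_eq_dotProduct, hss, smul_eq_mul]
    field_simp
  rw [hs', hr']
  simp only [dotp_eq_dotProduct, dotProduct_smul, add_dotProduct, sub_dotProduct, dotProduct_add,
    dotProduct_sub, smul_eq_mul] at hpp hqq ⊢
  rw [dotProduct_comm q p, hpp, hqq]
  set κ := p ⬝ᵥ q
  -- `t * t / (2 * t) = t / 2` holds also at `t = 0`, which covers parallel `r` and `s` (`κ = ±1`)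
  calc _ = a * b * ((1 + κ) * (1 + κ) / (2 * (1 + κ))) +
        a * b * ((1 - κ) * (1 - κ) / (2 * (1 - κ))) := by ring
    _ = a * b := by rw [mul_self_div_two_mul, mul_self_div_two_mul]; ring

lemma dotp_Qmat_mulVec {r s : Fin n → ℝ} (hr : r ≠ 0) (hs : s ≠ 0) :
    dotp (Qmat r s *ᵥ s) r = vnorm r * vnorm s * cosGAngle (ang r s) / 2 := by
  rw [Qmat, if_neg (by simp [hr, hs]), Matrix.add_mulVec, Matrix.smul_mulVec, Matrix.smul_mulVec,
    Matrix.one_mulVec, dotp_eq_dotProduct, add_dotProduct, smul_dotProduct, smul_dotProduct,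
    ← dotp_eq_dotProduct, ← dotp_eq_dotProduct, dotp_Mswap_mulVec hr hs, dotp_comm s r,
    ← vnorm_mul_vnorm_mul_cos_ang, cosGAngle, smul_eq_mul, smul_eq_mul]
  field_simp

end Qmat

lemma subnet_zero (nn : ℕ → ℕ) (W : ∀ i : ℕ, Matrix (Fin (nn (i + 1))) (Fin (nn i)) ℝ) (j : ℕ) :
    subnet nn W j 0 = 0 := by
  induction j with
  | zero => rfl
  | succ j ih =>
    rw [subnet, ih, Matrix.mulVec_zero]
    funext i
    simp [reluVec]

lemma subnet_succ (nn : ℕ → ℕ) (W : ∀ i : ℕ, Matrix (Fin (nn (i + 1))) (Fin (nn i)) ℝ)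
    (j : ℕ) (x : Fin (nn 0) → ℝ) :
    subnet nn W (j + 1) x = Wplus (W j) (subnet nn W j x) *ᵥ subnet nn W j x := by
  funext i
  simp only [subnet, reluVec, Wplus, Matrix.mulVec, dotProduct, Matrix.of_apply]
  split_ifs with h
  · exact max_eq_left h.le
  · simp [max_eq_right (not_lt.mp h)]

namespace R2WDCond

variable {nn : ℕ → ℕ} {d : ℕ} {W : ∀ i : ℕ, Matrix (Fin (nn (i + 1))) (Fin (nn i)) ℝ} {ε : ℝ}

lemma abs_dotp_subnet_succ_sub_le (hG : R2WDCond nn d W ε) {i : ℕ} (hi : i < d)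
    {x y : Fin (nn 0) → ℝ} (hx : subnet nn W i x ≠ 0) (hy : subnet nn W i y ≠ 0) :
    |dotp (subnet nn W (i + 1) x) (subnet nn W (i + 1) y) -
        vnorm (subnet nn W i x) * vnorm (subnet nn W i y) *
          cosGAngle (ang (subnet nn W i x) (subnet nn W i y)) / 2| ≤
      ε * vnorm (subnet nn W i x) * vnorm (subnet nn W i y) := by
  have h := hG i hi x y y 0 x 0
  simp only [subnet_zero, sub_zero, Matrix.sub_mulVec, dotp_eq_dotProduct, sub_dotProduct] at h
  rw [← dotp_eq_dotProduct, ← dotp_eq_dotProduct, dotp_mulVec_transpose_mul, ← subnet_succ,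
    ← subnet_succ, dotp_Qmat_mulVec hx hy, dotp_comm] at h
  linarith

lemma abs_vnorm_subnet_succ_mul_self_sub_le (hG : R2WDCond nn d W ε) {i : ℕ} (hi : i < d)
    {x : Fin (nn 0) → ℝ} (hx : subnet nn W i x ≠ 0) :
    |vnorm (subnet nn W (i + 1) x) * vnorm (subnet nn W (i + 1) x) -
        vnorm (subnet nn W i x) * vnorm (subnet nn W i x) / 2| ≤
      ε * vnorm (subnet nn W i x) * vnorm (subnet nn W i x) := by
  simpa [← dotp_self, ang_self hx, cosGAngle_zero] using hG.abs_dotp_subnet_succ_sub_le hi hx hx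

lemma subnet_succ_ne_zero (hG : R2WDCond nn d W ε) (hε : ε < 1 / 2) {i : ℕ} (hi : i < d)
    {x : Fin (nn 0) → ℝ} (hx : subnet nn W i x ≠ 0) : subnet nn W (i + 1) x ≠ 0 := by
  intro h0
  have h := hG.abs_vnorm_subnet_succ_mul_self_sub_le hi hx
  have ha := vnorm_pos hx
  rw [h0, show vnorm (0 : Fin (nn (i + 1)) → ℝ) = 0 by simp [vnorm, dotp], zero_mul, zero_sub,
    abs_neg, abs_of_pos (by positivity)] at h
  nlinarith [mul_pos ha ha]

lemma subnet_ne_zero (hG : R2WDCond nn d W ε) (hε : ε < 1 / 2) {x : Fin (nn 0) → ℝ} (hx : x ≠ 0)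
    {j : ℕ} (hj : j ≤ d) : subnet nn W j x ≠ 0 := by
  induction j with
  | zero => exact hx
  | succ j ih => exact hG.subnet_succ_ne_zero hε hj (ih (Nat.le_of_succ_le hj))

lemma abs_ang_subnet_succ_sub_gAngle_le (hG : R2WDCond nn d W ε) (hε : 10 * ε < 1) {i : ℕ}
    (hi : i < d) {x y : Fin (nn 0) → ℝ} (hx : subnet nn W i x ≠ 0) (hy : subnet nn W i y ≠ 0) :
    |ang (subnet nn W (i + 1) x) (subnet nn W (i + 1) y) -
        gAngle (ang (subnet nn W i x) (subnet nn W i y))| ≤ 4 * Real.sqrt ε := by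
  have hθ := ang_mem_Icc (subnet nn W i x) (subnet nn W i y)
  have hcos : |Real.cos (ang (subnet nn W (i + 1) x) (subnet nn W (i + 1) y)) -
      Real.cos (gAngle (ang (subnet nn W i x) (subnet nn W i y)))| ≤ 5 * ε := by
    rw [cos_ang, cos_gAngle hθ]
    exact abs_div_mul_sub_le_five_mul (vnorm_pos hx) (vnorm_pos hy) (vnorm_nonneg _)
      (vnorm_nonneg _) hε (abs_cosGAngle_le_one hθ) (hG.abs_vnorm_subnet_succ_mul_self_sub_le hi hx)
      (hG.abs_vnorm_subnet_succ_mul_self_sub_le hi hy) (hG.abs_dotp_subnet_succ_sub_le hi hx hy)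
  exact abs_sub_le_four_mul_sqrt_of_abs_cos_sub_cos_le (ang_mem_Icc _ _)
    ⟨Real.arccos_nonneg _, Real.arccos_le_pi _⟩ hε hcos

end R2WDCond

theorem statement13_general (nn : ℕ → ℕ) (d : ℕ)
    (W : ∀ i : ℕ, Matrix (Fin (nn (i + 1))) (Fin (nn i)) ℝ) (ε : ℝ)
    (hε10 : 10 * ε < 1)
    (hG : R2WDCond nn d W ε) :
    ∀ x y : Fin (nn 0) → ℝ, x ≠ 0 → y ≠ 0 → ∀ i : ℕ, i < d →
      subnet nn W (i + 1) x ≠ 0 ∧ subnet nn W (i + 1) y ≠ 0 ∧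
      |ang (subnet nn W (i + 1) x) (subnet nn W (i + 1) y) -
          gAngle (ang (subnet nn W i x) (subnet nn W i y))| ≤ 4 * Real.sqrt ε := by
  intro x y hx hy i hi
  have hε : ε < 1 / 2 := by linarith
  exact ⟨hG.subnet_ne_zero hε hx hi, hG.subnet_ne_zero hε hy hi,
    hG.abs_ang_subnet_succ_sub_gAngle_le hε10 hi (hG.subnet_ne_zero hε hx hi.le)
      (hG.subnet_ne_zero hε hy hi.le)⟩

theorem statement13 (nn : ℕ → ℕ) (d : ℕ)
    (W : ∀ i : ℕ, Matrix (Fin (nn (i + 1))) (Fin (nn i)) ℝ) (ε : ℝ)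
    (hε : 0 < ε) (hεd : 2 * (d : ℝ) * ε < 1) (hε10 : 10 * ε < 1)
    (hG : R2WDCond nn d W ε) :
    ∀ x y : Fin (nn 0) → ℝ, x ≠ 0 → y ≠ 0 → ∀ i : ℕ, i < d →
      subnet nn W (i + 1) x ≠ 0 ∧ subnet nn W (i + 1) y ≠ 0 ∧
      |ang (subnet nn W (i + 1) x) (subnet nn W (i + 1) y) -
          gAngle (ang (subnet nn W i x) (subnet nn W i y))| ≤ 4 * Real.sqrt ε :=
  statement13_general nn d W ε hε10 hG

end R2WDCFormal
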